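/- Let f : I → ℝ³ be a unit speed timelike curve on S²₁. Fix v₀ ∈ I, set u₀ = d_f(v₀) = (κ_g(v₀)f(v₀) − s(v₀))/√(κ_g(v₀)² + 1), r₀ = κ_g(v₀)/√(κ_g(v₀)² + 1), and g(v) = ⟪f(v), u₀⟫ − r₀. Then the conditions g'''(v₀) = 0 and g''''(v₀) ≠ 0 hold simultaneously if and only if κ_g'(v₀) = 0 and κ_g''(v₀) ≠ 0 (i.e. the osculating pseudo-circle and f have exactly a 4-point contact at f(v₀) if and only if κ_g'(v₀) = 0 and κ_g''(v₀) ≠ 0). -/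

import Mathlib

noncomputable section

/-- Minkowski inner product ⟪x,y⟫ = x₁y₁ + x₂y₂ − x₃y₃ on ℝ³. -/
def mdot (x y : Fin 3 → ℝ) : ℝ := x 0 * y 0 + x 1 * y 1 - x 2 * y 2

/-- Lorentzian cross product x ×ₗ y. -/
def lcross (x y : Fin 3 → ℝ) : Fin 3 → ℝ :=
  ![x 1 * y 2 - x 2 * y 1, x 2 * y 0 - x 0 * y 2, x 1 * y 0 - x 0 * y 1]

/-- Determinant of the 3×3 matrix with rows x, y, z. -/
def det3 (x y z : Fin 3 → ℝ) : ℝ :=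
  x 0 * (y 1 * z 2 - y 2 * z 1) - x 1 * (y 0 * z 2 - y 2 * z 0) + x 2 * (y 0 * z 1 - y 1 * z 0)

/-- Minkowski norm ‖x‖ = √|⟪x,x⟫|. -/
def mnorm (x : Fin 3 → ℝ) : ℝ := Real.sqrt |mdot x x|

open scoped ContDiff

namespace Stmt9Aux

lemma hasDerivAt_mdot2 {x y : ℝ → Fin 3 → ℝ} {x' y' : Fin 3 → ℝ} {w : ℝ}
    (hx : HasDerivAt x x' w) (hy : HasDerivAt y y' w) :
    HasDerivAt (fun v => mdot (x v) (y v)) (mdot x' (y w) + mdot (x w) y') w := by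
  have hx0 := hasDerivAt_pi.1 hx 0
  have hx1 := hasDerivAt_pi.1 hx 1
  have hx2 := hasDerivAt_pi.1 hx 2
  have hy0 := hasDerivAt_pi.1 hy 0
  have hy1 := hasDerivAt_pi.1 hy 1
  have hy2 := hasDerivAt_pi.1 hy 2
  have H := ((hx0.mul hy0).add (hx1.mul hy1)).sub (hx2.mul hy2)
  simp only [mdot]
  convert H using 1
  all_goals first | rfl | ring

lemma hasDerivAt_mdotc {x : ℝ → Fin 3 → ℝ} {x' : Fin 3 → ℝ} {w : ℝ}
    (hx : HasDerivAt x x' w) (c : Fin 3 → ℝ) :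
    HasDerivAt (fun v => mdot (x v) c) (mdot x' c) w := by
  have hx0 := hasDerivAt_pi.1 hx 0
  have hx1 := hasDerivAt_pi.1 hx 1
  have hx2 := hasDerivAt_pi.1 hx 2
  have H := ((hx0.mul_const (c 0)).add (hx1.mul_const (c 1))).sub (hx2.mul_const (c 2))
  simp only [mdot]
  exact H

lemma hasDerivAt_det3 {x y z : ℝ → Fin 3 → ℝ} {x' y' z' : Fin 3 → ℝ} {w : ℝ}
    (hx : HasDerivAt x x' w) (hy : HasDerivAt y y' w) (hz : HasDerivAt z z' w) :
    HasDerivAt (fun v => det3 (x v) (y v) (z v))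
      (det3 x' (y w) (z w) + det3 (x w) y' (z w) + det3 (x w) (y w) z') w := by
  have hx0 := hasDerivAt_pi.1 hx 0
  have hx1 := hasDerivAt_pi.1 hx 1
  have hx2 := hasDerivAt_pi.1 hx 2
  have hy0 := hasDerivAt_pi.1 hy 0
  have hy1 := hasDerivAt_pi.1 hy 1
  have hy2 := hasDerivAt_pi.1 hy 2
  have hz0 := hasDerivAt_pi.1 hz 0
  have hz1 := hasDerivAt_pi.1 hz 1
  have hz2 := hasDerivAt_pi.1 hz 2
  have H := ((hx0.mul ((hy1.mul hz2).sub (hy2.mul hz1))).sub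
      (hx1.mul ((hy0.mul hz2).sub (hy2.mul hz0)))).add
      (hx2.mul ((hy0.mul hz1).sub (hy1.mul hz0)))
  simp only [det3]
  convert H using 1
  all_goals first | rfl | (simp only [Pi.mul_apply, Pi.sub_apply]; ring)

lemma deriv_val_zero_of_const {φ : ℝ → ℝ} {c : ℝ} {s : Set ℝ} (hs : IsOpen s)
    (hφ : ∀ w ∈ s, φ w = c) {w : ℝ} (hw : w ∈ s) {d : ℝ} (hd : HasDerivAt φ d w) :
    d = 0 := by
  have h1 : φ =ᶠ[nhds w] (fun _ => c) := Filter.eventuallyEq_of_mem (hs.mem_nhds hw) hφ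
  have h2 := h1.deriv_eq
  rw [hd.deriv] at h2
  simpa using h2

lemma chain {F : ℝ → Fin 3 → ℝ} {s : Set ℝ} (hs : IsOpen s) (h : ContDiffOn ℝ ∞ F s) :
    (∀ w ∈ s, HasDerivAt F (deriv F w) w) ∧ ContDiffOn ℝ ∞ (deriv F) s := by
  obtain ⟨hd, hd'⟩ := (contDiffOn_infty_iff_deriv_of_isOpen hs).1 h
  exact ⟨fun w hw => (hd.differentiableAt (hs.mem_nhds hw)).hasDerivAt, hd'⟩

end Stmt9Aux

open Stmt9Aux in
/-- The osculating pseudo-circle and f have exactly a 4-point contact at f(v₀)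
(g'''(v₀) = 0 and g''''(v₀) ≠ 0) if and only if κ_g'(v₀) = 0 and κ_g''(v₀) ≠ 0. -/
theorem stmt_9 (a b : ℝ) (f : ℝ → Fin 3 → ℝ)
    (hf : ContDiffOn ℝ (⊤ : ℕ∞) f (Set.Ioo a b))
    (hsph : ∀ v ∈ Set.Ioo a b, mdot (f v) (f v) = 1)
    (htl : ∀ v ∈ Set.Ioo a b, mdot (deriv f v) (deriv f v) = -1)
    (t s : ℝ → Fin 3 → ℝ) (kg : ℝ → ℝ)
    (ht : t = fun w => deriv f w)
    (hs : s = fun w => lcross (f w) (t w))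
    (hkg : kg = fun w => det3 (f w) (t w) (deriv t w))
    (v₀ : ℝ) (hv₀ : v₀ ∈ Set.Ioo a b)
    (u₀ : Fin 3 → ℝ)
    (hu₀ : u₀ = (Real.sqrt (kg v₀ ^ 2 + 1))⁻¹ • (kg v₀ • f v₀ - s v₀))
    (r₀ : ℝ) (hr₀ : r₀ = kg v₀ / Real.sqrt (kg v₀ ^ 2 + 1))
    (g : ℝ → ℝ) (hg : g = fun w => mdot (f w) u₀ - r₀) :
    (deriv (deriv (deriv g)) v₀ = 0 ∧ deriv (deriv (deriv (deriv g))) v₀ ≠ 0) ↔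
      (deriv kg v₀ = 0 ∧ deriv (deriv kg) v₀ ≠ 0) := by
  have hI : IsOpen (Set.Ioo a b) := isOpen_Ioo
  have hC0 : ContDiffOn ℝ ∞ f (Set.Ioo a b) := hf.of_le (by simp)
  obtain ⟨hD0, hC1⟩ := chain hI hC0
  obtain ⟨hD1, hC2⟩ := chain hI hC1
  obtain ⟨hD2, hC3⟩ := chain hI hC2
  obtain ⟨hD3, -⟩ := chain hI hC3
  -- constraint chain
  have hm01 : ∀ w ∈ Set.Ioo a b, mdot (f w) (deriv f w) = 0 := by
    intro w hw
    have h0 := deriv_val_zero_of_const hI hsph hw (hasDerivAt_mdot2 (hD0 w hw) (hD0 w hw))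
    have hc : mdot (deriv f w) (f w) = mdot (f w) (deriv f w) := by simp only [mdot]; ring
    rw [hc] at h0; linarith
  have hm02 : ∀ w ∈ Set.Ioo a b, mdot (f w) (deriv (deriv f) w) = 1 := by
    intro w hw
    have h0 := deriv_val_zero_of_const hI hm01 hw (hasDerivAt_mdot2 (hD0 w hw) (hD1 w hw))
    -- h0 : mdot (deriv f w) (deriv f w) + mdot (f w) (deriv (deriv f) w) = 0
    have h1 := htl w hw
    linarith
  have hm12 : ∀ w ∈ Set.Ioo a b, mdot (deriv f w) (deriv (deriv f) w) = 0 := by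
    intro w hw
    have h0 := deriv_val_zero_of_const hI htl hw (hasDerivAt_mdot2 (hD1 w hw) (hD1 w hw))
    have hc : mdot (deriv (deriv f) w) (deriv f w) = mdot (deriv f w) (deriv (deriv f) w) := by
      simp only [mdot]; ring
    rw [hc] at h0; linarith
  have hm03 : ∀ w ∈ Set.Ioo a b, mdot (f w) (deriv (deriv (deriv f)) w) = 0 := by
    intro w hw
    have h0 := deriv_val_zero_of_const hI hm02 hw (hasDerivAt_mdot2 (hD0 w hw) (hD2 w hw))
    have hc : mdot (deriv f w) (deriv (deriv f) w) = 0 := hm12 w hw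
    linarith
  have hm1304 : mdot (deriv f v₀) (deriv (deriv (deriv f)) v₀)
      + mdot (f v₀) (deriv (deriv (deriv (deriv f))) v₀) = 0 := by
    have h0 := deriv_val_zero_of_const hI hm03 hv₀ (hasDerivAt_mdot2 (hD0 v₀ hv₀) (hD3 v₀ hv₀))
    linarith
  have hm2213 : mdot (deriv (deriv f) v₀) (deriv (deriv f) v₀)
      + mdot (deriv f v₀) (deriv (deriv (deriv f)) v₀) = 0 := by
    have h0 := deriv_val_zero_of_const hI hm12 hv₀ (hasDerivAt_mdot2 (hD1 v₀ hv₀) (hD2 v₀ hv₀))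
    linarith
  -- g-derivative chain
  have hg1 : ∀ w ∈ Set.Ioo a b, deriv g w = mdot (deriv f w) u₀ := by
    intro w hw
    rw [hg]
    exact ((hasDerivAt_mdotc (hD0 w hw) u₀).sub_const r₀).deriv
  have hg2 : ∀ w ∈ Set.Ioo a b, deriv (deriv g) w = mdot (deriv (deriv f) w) u₀ := by
    intro w hw
    have he : deriv g =ᶠ[nhds w] (fun v => mdot (deriv f v) u₀) :=
      Filter.eventuallyEq_of_mem (hI.mem_nhds hw) hg1
    rw [he.deriv_eq]
    exact (hasDerivAt_mdotc (hD1 w hw) u₀).deriv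
  have hg3 : ∀ w ∈ Set.Ioo a b,
      deriv (deriv (deriv g)) w = mdot (deriv (deriv (deriv f)) w) u₀ := by
    intro w hw
    have he : deriv (deriv g) =ᶠ[nhds w] (fun v => mdot (deriv (deriv f) v) u₀) :=
      Filter.eventuallyEq_of_mem (hI.mem_nhds hw) hg2
    rw [he.deriv_eq]
    exact (hasDerivAt_mdotc (hD2 w hw) u₀).deriv
  have hg4 : deriv (deriv (deriv (deriv g))) v₀
      = mdot (deriv (deriv (deriv (deriv f))) v₀) u₀ := by
    have he : deriv (deriv (deriv g)) =ᶠ[nhds v₀]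
        (fun v => mdot (deriv (deriv (deriv f)) v) u₀) :=
      Filter.eventuallyEq_of_mem (hI.mem_nhds hv₀) hg3
    rw [he.deriv_eq]
    exact (hasDerivAt_mdotc (hD3 v₀ hv₀) u₀).deriv
  -- kg and its derivatives
  have hkg' : kg = fun w => det3 (f w) (deriv f w) (deriv (deriv f) w) := by
    rw [hkg, ht]
  have hK1 : ∀ w ∈ Set.Ioo a b,
      deriv kg w = det3 (f w) (deriv f w) (deriv (deriv (deriv f)) w) := by
    intro w hw
    have H : HasDerivAt kg
        (det3 (deriv f w) (deriv f w) (deriv (deriv f) w)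
          + det3 (f w) (deriv (deriv f) w) (deriv (deriv f) w)
          + det3 (f w) (deriv f w) (deriv (deriv (deriv f)) w)) w := by
      rw [hkg']
      exact hasDerivAt_det3 (hD0 w hw) (hD1 w hw) (hD2 w hw)
    rw [H.deriv]
    simp only [det3]; ring
  have hK2 : deriv (deriv kg) v₀
      = det3 (f v₀) (deriv (deriv f) v₀) (deriv (deriv (deriv f)) v₀)
        + det3 (f v₀) (deriv f v₀) (deriv (deriv (deriv (deriv f))) v₀) := by
    have he : deriv kg =ᶠ[nhds v₀]
        (fun w => det3 (f w) (deriv f w) (deriv (deriv (deriv f)) w)) :=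
      Filter.eventuallyEq_of_mem (hI.mem_nhds hv₀) hK1
    rw [he.deriv_eq]
    have H := hasDerivAt_det3 (hD0 v₀ hv₀) (hD1 v₀ hv₀) (hD3 v₀ hv₀)
    rw [H.deriv]
    simp only [det3]; ring
  -- evaluation of mdot against u₀
  have hcpos : 0 < Real.sqrt (kg v₀ ^ 2 + 1) := Real.sqrt_pos.2 (by positivity)
  have hsv : s v₀ = lcross (f v₀) (deriv f v₀) := by rw [hs, ht]
  have hmu : ∀ X : Fin 3 → ℝ, mdot X u₀ = (Real.sqrt (kg v₀ ^ 2 + 1))⁻¹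
      * (kg v₀ * mdot X (f v₀) - det3 (f v₀) (deriv f v₀) X) := by
    intro X
    rw [hu₀, hsv]
    simp only [mdot, det3, lcross, Pi.smul_apply, Pi.sub_apply, smul_eq_mul,
      Matrix.cons_val_zero, Matrix.cons_val_one, Matrix.head_cons, Matrix.cons_val_two,
      Matrix.tail_cons]
    ring
  -- the two key formulas
  have h3 : deriv (deriv (deriv g)) v₀ = -(Real.sqrt (kg v₀ ^ 2 + 1))⁻¹ * deriv kg v₀ := by
    rw [hg3 v₀ hv₀, hmu _, hK1 v₀ hv₀]
    have e6 : mdot (f v₀) (deriv (deriv (deriv f)) v₀) = 0 := hm03 v₀ hv₀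
    have hc : mdot (deriv (deriv (deriv f)) v₀) (f v₀)
        = mdot (f v₀) (deriv (deriv (deriv f)) v₀) := by simp only [mdot]; ring
    rw [hc, e6]; ring
  have h4 : deriv (deriv (deriv (deriv g))) v₀
      = -(Real.sqrt (kg v₀ ^ 2 + 1))⁻¹ * deriv (deriv kg) v₀ := by
    rw [hg4, hmu _, hK2]
    have hκ : kg v₀ = det3 (f v₀) (deriv f v₀) (deriv (deriv f) v₀) := by rw [hkg']
    have e1 : mdot (f v₀) (f v₀) = 1 := hsph v₀ hv₀
    have e2 : mdot (f v₀) (deriv f v₀) = 0 := hm01 v₀ hv₀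
    have e3 : mdot (deriv f v₀) (deriv f v₀) = -1 := htl v₀ hv₀
    have e4 : mdot (f v₀) (deriv (deriv f) v₀) = 1 := hm02 v₀ hv₀
    have e5 : mdot (deriv f v₀) (deriv (deriv f) v₀) = 0 := hm12 v₀ hv₀
    have e6 : mdot (f v₀) (deriv (deriv (deriv f)) v₀) = 0 := hm03 v₀ hv₀
    have hACD : det3 (f v₀) (deriv (deriv f) v₀) (deriv (deriv (deriv f)) v₀)
        = det3 (f v₀) (deriv f v₀) (deriv (deriv f) v₀)
          * mdot (deriv f v₀) (deriv (deriv (deriv f)) v₀) := by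
      have egram : det3 (f v₀) (deriv (deriv f) v₀) (deriv (deriv (deriv f)) v₀)
          * (mdot (f v₀) (deriv f v₀) ^ 2 - mdot (f v₀) (f v₀) * mdot (deriv f v₀) (deriv f v₀))
          = -(-(det3 (f v₀) (deriv f v₀) (deriv (deriv f) v₀))
              * (mdot (f v₀) (f v₀) * mdot (deriv f v₀) (deriv (deriv (deriv f)) v₀)
                - mdot (f v₀) (deriv f v₀) * mdot (f v₀) (deriv (deriv (deriv f)) v₀))
            + det3 (f v₀) (deriv f v₀) (deriv (deriv (deriv f)) v₀)
              * (mdot (f v₀) (f v₀) * mdot (deriv f v₀) (deriv (deriv f) v₀)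
                - mdot (f v₀) (deriv f v₀) * mdot (f v₀) (deriv (deriv f) v₀))) := by
        simp only [mdot, det3]; ring
      rw [e1, e2, e3, e4, e5, e6] at egram
      linear_combination egram
    have hc : mdot (deriv (deriv (deriv (deriv f))) v₀) (f v₀)
        = mdot (f v₀) (deriv (deriv (deriv (deriv f))) v₀) := by simp only [mdot]; ring
    rw [hc]
    linear_combination (Real.sqrt (kg v₀ ^ 2 + 1))⁻¹ * hACD
      + (Real.sqrt (kg v₀ ^ 2 + 1))⁻¹
        * det3 (f v₀) (deriv f v₀) (deriv (deriv f) v₀) * hm1304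
      + (Real.sqrt (kg v₀ ^ 2 + 1))⁻¹
        * mdot (f v₀) (deriv (deriv (deriv (deriv f))) v₀) * hκ
  -- conclude
  rw [h3, h4]
  have hcne : (Real.sqrt (kg v₀ ^ 2 + 1))⁻¹ ≠ 0 := inv_ne_zero (ne_of_gt hcpos)
  constructor
  · rintro ⟨p, q⟩
    refine ⟨?_, fun h => q (by rw [h, mul_zero])⟩
    rcases mul_eq_zero.mp p with h | h
    · exact absurd (neg_eq_zero.mp h) hcne
    · exact h
  · rintro ⟨p, q⟩
    refine ⟨by rw [p, mul_zero], fun h => q ?_⟩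
    rcases mul_eq_zero.mp h with h' | h'
    · exact absurd (neg_eq_zero.mp h') hcne
    · exact h'
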